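/- arXiv:math/0309264 — 7 statements merged into one kernel-verified Lean document; each statement's English description precedes it below -/
import Mathlib

section
/- Let n ≥ 1, let x and b be symmetric n×n real matrices, let a be an arbitrary n×n real matrix, and let g ∈ GL(n,ℝ) with det g > 0. Set M(x,g) = [[g, x(gᵀ)⁻¹],[0, (gᵀ)⁻¹]] and N(b,a) = [[a, b],[0, −aᵀ]]. Then M(x,g) · N(b,a) · M(x,g)⁻¹ = N(b', a') where a' = g a g⁻¹ and b' = g b gᵀ − ( g a g⁻¹ x + (g a g⁻¹ x)ᵀ ). -/
open Matrix

theorem adjoint_action_formula (n : ℕ) (hn : 1 ≤ n)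
    (x b a g : Matrix (Fin n) (Fin n) ℝ)
    (hx : x.IsSymm) (hb : b.IsSymm) (hg : 0 < g.det) :
    Matrix.fromBlocks g (x * (gᵀ)⁻¹) 0 (gᵀ)⁻¹ *
      Matrix.fromBlocks a b 0 (-aᵀ) *
      (Matrix.fromBlocks g (x * (gᵀ)⁻¹) 0 (gᵀ)⁻¹)⁻¹ =
    Matrix.fromBlocks (g * a * g⁻¹)
      (g * b * gᵀ - (g * a * g⁻¹ * x + (g * a * g⁻¹ * x)ᵀ))
      0 (-(g * a * g⁻¹)ᵀ) := by
  have hdet : g.det ≠ 0 := ne_of_gt hg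
  have hdu : IsUnit g.det := isUnit_iff_ne_zero.2 hdet
  have hgtu : IsUnit gᵀ := (Matrix.isUnit_iff_isUnit_det gᵀ).2 (by
    rw [Matrix.det_transpose]; exact hdu)
  have h1 : g⁻¹ * g = 1 := Matrix.nonsing_inv_mul g hdu
  have h3 : gᵀ * (gᵀ)⁻¹ = 1 := Matrix.mul_nonsing_inv gᵀ (by
    rw [Matrix.det_transpose]; exact hdu)
  have hM : IsUnit (Matrix.fromBlocks g (x * (gᵀ)⁻¹) (0 : Matrix (Fin n) (Fin n) ℝ) (gᵀ)⁻¹) := by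
    rw [Matrix.isUnit_iff_isUnit_det, Matrix.det_fromBlocks_zero₂₁]
    exact hdu.mul (Matrix.isUnit_nonsing_inv_det gᵀ (by rw [Matrix.det_transpose]; exact hdu))
  have := hM.invertible
  rw [Matrix.mul_inv_eq_iff_eq_mul_of_invertible]
  rw [Matrix.fromBlocks_multiply, Matrix.fromBlocks_multiply]
  have hx' : xᵀ = x := hx
  rw [Matrix.fromBlocks_inj]
  refine ⟨?_, ?_, ?_, ?_⟩
  · simp [Matrix.mul_assoc, h1]
  · simp only [Matrix.sub_mul, Matrix.add_mul, Matrix.mul_assoc, h3, h1, Matrix.mul_one,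
      Matrix.transpose_mul, Matrix.transpose_nonsing_inv, Matrix.transpose_transpose, hx',
      Matrix.mul_neg, Matrix.neg_mul]
    abel
  · simp
  · simp [Matrix.transpose_nonsing_inv, Matrix.mul_assoc, h3]
end

section
/- Let n = 2k or n = 2k+1 with k ≥ 1, and let λ₁ > λ₂ > ⋯ > λ_k > 0. A pair (x, g), with x symmetric n×n real and g ∈ GL(n,ℝ) with det g > 0, satisfies Ad*(x,g)(1ₙ, H(λ)) = (1ₙ, H(λ)) if and only if x = 0 and g is block-diagonal with k consecutive 2×2 diagonal blocks each equal to a rotation matrix [[cos θᵢ, −sin θᵢ],[sin θᵢ, cos θᵢ]] for some θᵢ ∈ ℝ (followed by a final 1×1 block equal to 1 when n = 2k+1). In particular the stabilizer of (1ₙ, H(λ)) is isomorphic to SO(2) × ⋯ × SO(2) (k factors). -/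
open Matrix

/-- The coadjoint action Ad*(x,g)(c,a) = (ǧ c g⁻¹, g a g⁻¹ + x ǧ c g⁻¹),
    where ǧ = (gᵀ)⁻¹. -/
noncomputable def coadjAct {n : ℕ} (x g c a : Matrix (Fin n) (Fin n) ℝ) :
    Matrix (Fin n) (Fin n) ℝ × Matrix (Fin n) (Fin n) ℝ :=
  ((gᵀ)⁻¹ * c * g⁻¹, g * a * g⁻¹ + x * ((gᵀ)⁻¹ * c * g⁻¹))

/-- The n×n skew-symmetric block-diagonal matrix with k consecutive 2×2 blocks
    [[0, λᵢ],[−λᵢ, 0]] (and a final zero block if n > 2k). -/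
def Hmat (n k : ℕ) (lam : Fin k → ℝ) : Matrix (Fin n) (Fin n) ℝ :=
  fun i j =>
    if h1 : (j : ℕ) = (i : ℕ) + 1 ∧ (i : ℕ) % 2 = 0 ∧ (i : ℕ) / 2 < k then
      lam ⟨(i : ℕ) / 2, h1.2.2⟩
    else if h2 : (i : ℕ) = (j : ℕ) + 1 ∧ (j : ℕ) % 2 = 0 ∧ (j : ℕ) / 2 < k then
      -lam ⟨(j : ℕ) / 2, h2.2.2⟩
    else 0

/-- The block-diagonal matrix with k consecutive 2×2 rotation blocks
    [[cos θᵢ, −sin θᵢ],[sin θᵢ, cos θᵢ]] (and a final 1×1 block equal to 1 if n > 2k). -/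
noncomputable def RotMat (n k : ℕ) (θ : Fin k → ℝ) : Matrix (Fin n) (Fin n) ℝ :=
  fun i j =>
    if h : (i : ℕ) = (j : ℕ) ∧ (i : ℕ) / 2 < k then Real.cos (θ ⟨(i : ℕ) / 2, h.2⟩)
    else if (i : ℕ) = (j : ℕ) then 1
    else if h2 : (j : ℕ) = (i : ℕ) + 1 ∧ (i : ℕ) % 2 = 0 ∧ (i : ℕ) / 2 < k then
      -Real.sin (θ ⟨(i : ℕ) / 2, h2.2.2⟩)
    else if h3 : (i : ℕ) = (j : ℕ) + 1 ∧ (j : ℕ) % 2 = 0 ∧ (j : ℕ) / 2 < k then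
      Real.sin (θ ⟨(j : ℕ) / 2, h3.2.2⟩)
    else 0

/-!
The first component of the stabilizer equation says that `g` is orthogonal; the second then
reads `g H gᵀ + x = H`, whose symmetric part gives `x = 0`, so that `g` commutes with `H`.
Reordering the basis, `H` becomes block diagonal with blocks `λₘ J` and a zero tail. Commuting
with `H` implies commuting with `H² = diag(-λₘ², 0)`; the `λₘ²` are distinct and nonzero, so `g`
is block diagonal for the same blocks. A `2 × 2` block commuting with `J` has the form
`[[a, -b], [b, a]]`, orthogonality makes it a rotation, and then `det g > 0` forces the `1 × 1`
tail block, which is `±1`, to be `1`.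
-/

lemma Matrix.apply_eq_zero_of_commute_diagonal {n R : Type*} [Fintype n] [DecidableEq n]
    [CommRing R] [NoZeroDivisors R] {A : Matrix n n R} {d : n → R}
    (h : Commute A (diagonal d)) {i j : n} (hij : d i ≠ d j) : A i j = 0 := by
  have e := congrFun₂ h.eq i j
  rw [mul_diagonal, diagonal_mul] at e
  exact (mul_eq_zero.1 (by linear_combination e : A i j * (d j - d i) = 0)).resolve_right
    (sub_ne_zero.2 hij.symm)

lemma Matrix.eq_one_of_det_eq_one_of_subsingleton {ι R : Type*} [Fintype ι] [DecidableEq ι]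
    [Subsingleton ι] [CommRing R] {C : Matrix ι ι R} (h : C.det = 1) : C = 1 := by
  ext i j
  obtain rfl := Subsingleton.elim i j
  have : Unique ι := uniqueOfSubsingleton i
  rw [det_unique, Subsingleton.elim default i] at h
  rw [h, one_apply_eq]

lemma Matrix.inv_transpose_mul_inv_eq_one_iff {n R : Type*} [Fintype n] [DecidableEq n]
    [CommRing R] {g : Matrix n n R} (hg : IsUnit g.det) : (gᵀ)⁻¹ * g⁻¹ = 1 ↔ g * gᵀ = 1 := by
  have hu : IsUnit (g * gᵀ).det := by rw [det_mul, det_transpose]; exact hg.mul hg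
  rw [← mul_inv_rev]
  refine ⟨fun h => ?_, fun h => by rw [h, inv_one]⟩
  rw [← nonsing_inv_nonsing_inv _ hu, h, inv_one]

lemma Matrix.eq_zero_of_isSymm_of_add_eq {n R : Type*} [Ring R] [NoZeroDivisors R] [CharZero R]
    {x A B : Matrix n n R} (hx : x.IsSymm)
    (hA : Aᵀ = -A) (hB : Bᵀ = -B) (h : A + x = B) : x = 0 := by
  have hxAB : x = B - A := eq_sub_of_add_eq' h
  have hneg : x = -x := by
    conv_lhs => rw [← hx.eq, hxAB, transpose_sub, hA, hB]
    rw [hxAB]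
    abel
  ext i j
  have hij := congrFun₂ hneg i j
  rw [Matrix.neg_apply] at hij
  exact CharZero.eq_neg_self_iff.1 hij

section TwoByTwo

def skewBlock (a : ℝ) : Matrix (Fin 2) (Fin 2) ℝ := !![0, a; -a, 0]

noncomputable def rotBlock (θ : ℝ) : Matrix (Fin 2) (Fin 2) ℝ :=
  !![Real.cos θ, -Real.sin θ; Real.sin θ, Real.cos θ]

lemma skewBlock_mul_self (a : ℝ) : skewBlock a * skewBlock a = diagonal fun _ => -a ^ 2 := by
  ext i j
  fin_cases i <;> fin_cases j <;> simp [skewBlock, sq]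

lemma eq_of_commute_skewBlock {a : ℝ} (ha : a ≠ 0) {B : Matrix (Fin 2) (Fin 2) ℝ}
    (h : Commute B (skewBlock a)) : B = !![B 0 0, -B 1 0; B 1 0, B 0 0] := by
  have e00 : -(B 0 1 * a) = a * B 1 0 := by
    simpa [skewBlock, mul_apply, Fin.sum_univ_two] using congrFun₂ h.eq 0 0
  have e01 : B 0 0 * a = a * B 1 1 := by
    simpa [skewBlock, mul_apply, Fin.sum_univ_two] using congrFun₂ h.eq 0 1
  have h01 : B 0 1 = -B 1 0 := mul_left_cancel₀ ha (by linear_combination -e00)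
  have h11 : B 1 1 = B 0 0 := mul_left_cancel₀ ha (by linear_combination -e01)
  conv_lhs => rw [eta_fin_two B, h01, h11]

lemma rotBlock_mul_transpose (θ : ℝ) : rotBlock θ * (rotBlock θ)ᵀ = 1 := by
  ext i j
  fin_cases i <;> fin_cases j <;>
    simp [rotBlock, mul_apply, Fin.sum_univ_two, ← sq, mul_comm]

lemma det_rotBlock (θ : ℝ) : (rotBlock θ).det = 1 := by
  simp [rotBlock, det_fin_two_of, ← sq]

lemma commute_rotBlock_skewBlock (θ a : ℝ) : Commute (rotBlock θ) (skewBlock a) := by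
  ext i j
  fin_cases i <;> fin_cases j <;>
    simp [rotBlock, skewBlock, mul_apply, Fin.sum_univ_two, mul_comm]

lemma sq_add_sq_eq_one_of_mul_transpose {a b : ℝ}
    (h : !![a, -b; b, a] * (!![a, -b; b, a])ᵀ = 1) : a ^ 2 + b ^ 2 = 1 := by
  simpa [mul_apply, Fin.sum_univ_two, sq] using congrFun₂ h 0 0

lemma exists_rotBlock_eq {a b : ℝ} (h : a ^ 2 + b ^ 2 = 1) :
    ∃ θ, rotBlock θ = !![a, -b; b, a] := by
  have hz : ‖(⟨a, b⟩ : ℂ)‖ = 1 := by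
    rw [Complex.norm_def, Real.sqrt_eq_one, Complex.normSq_mk, ← h]
    ring
  obtain ⟨θ, hθ⟩ := (Complex.norm_eq_one_iff _).1 hz
  have hcos : Real.cos θ = a := by simpa using congrArg Complex.re hθ
  have hsin : Real.sin θ = b := by simpa using congrArg Complex.im hθ
  exact ⟨θ, by rw [rotBlock, hcos, hsin]⟩

end TwoByTwo

section Blocks

variable {o ι : Type*} [Fintype o] [DecidableEq o] [Fintype ι]

def blockSkew (lam : o → ℝ) : Matrix ((Fin 2 × o) ⊕ ι) ((Fin 2 × o) ⊕ ι) ℝ :=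
  fromBlocks (blockDiagonal fun m => skewBlock (lam m)) 0 0 0

lemma commute_skewBlock_of_commute_blockSkew {lam : o → ℝ} {B : o → Matrix (Fin 2) (Fin 2) ℝ}
    {C : Matrix ι ι ℝ} (h : Commute (fromBlocks (blockDiagonal B) 0 0 C) (blockSkew lam))
    (m : o) : Commute (B m) (skewBlock (lam m)) := by
  have h' := h.eq
  simp only [blockSkew, fromBlocks_multiply, ← blockDiagonal_mul, Matrix.mul_zero,
    Matrix.zero_mul, add_zero, fromBlocks_inj] at h'
  exact congrFun (blockDiagonal_injective h'.1) m

variable [DecidableEq ι]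

noncomputable def blockRot (θ : o → ℝ) : Matrix ((Fin 2 × o) ⊕ ι) ((Fin 2 × o) ⊕ ι) ℝ :=
  fromBlocks (blockDiagonal fun m => rotBlock (θ m)) 0 0 1

lemma blockSkew_mul_self (lam : o → ℝ) :
    (blockSkew lam * blockSkew lam : Matrix ((Fin 2 × o) ⊕ ι) _ ℝ) =
      diagonal (Sum.elim (fun p => -lam p.2 ^ 2) 0) := by
  simp [blockSkew, fromBlocks_multiply, ← blockDiagonal_mul, skewBlock_mul_self,
    blockDiagonal_diagonal, ← fromBlocks_diagonal]

lemma exists_eq_fromBlocks_blockDiagonal_of_commute_blockSkew {lam : o → ℝ}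
    (hlam : ∀ m, lam m ≠ 0) (hinj : Function.Injective fun m => lam m ^ 2)
    {G : Matrix ((Fin 2 × o) ⊕ ι) _ ℝ} (h : Commute G (blockSkew lam)) :
    ∃ (B : o → Matrix (Fin 2) (Fin 2) ℝ) (C : Matrix ι ι ℝ),
      G = fromBlocks (blockDiagonal B) 0 0 C := by
  have hzero := fun i j => G.apply_eq_zero_of_commute_diagonal (i := i) (j := j)
    (blockSkew_mul_self (ι := ι) lam ▸ h.mul_right h)
  have hd : ∀ m, -lam m ^ 2 ≠ 0 := fun m => neg_ne_zero.2 (pow_ne_zero 2 (hlam m))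
  refine ⟨fun m => of fun t t' => G (.inl (t, m)) (.inl (t', m)), G.toBlocks₂₂, ?_⟩
  ext (⟨t, m⟩ | u) (⟨t', m'⟩ | u')
  · by_cases hm : m = m'
    · subst hm
      simp
    · rw [fromBlocks_apply₁₁, blockDiagonal_apply_ne _ _ _ hm]
      exact hzero (.inl (t, m)) (.inl (t', m')) (by simpa using hinj.ne hm)
  · simpa using hzero (.inl (t, m)) (.inr u') (by simpa using hd m)
  · simpa using hzero (.inr u) (.inl (t', m')) (by simpa using (hd m').symm)
  · rfl

lemma exists_eq_fromBlocks_of_commute_blockSkew {lam : o → ℝ}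
    (hlam : ∀ m, lam m ≠ 0) (hinj : Function.Injective fun m => lam m ^ 2)
    {G : Matrix ((Fin 2 × o) ⊕ ι) _ ℝ} (h : Commute G (blockSkew lam)) :
    ∃ (a b : o → ℝ) (C : Matrix ι ι ℝ),
      G = fromBlocks (blockDiagonal fun m => !![a m, -b m; b m, a m]) 0 0 C := by
  obtain ⟨B, C, rfl⟩ := exists_eq_fromBlocks_blockDiagonal_of_commute_blockSkew hlam hinj h
  refine ⟨fun m => B m 0 0, fun m => B m 1 0, C, ?_⟩
  conv_lhs => rw [show B = _ from funext fun m =>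
    eq_of_commute_skewBlock (hlam m) (commute_skewBlock_of_commute_blockSkew h m)]

lemma exists_eq_blockRot [Subsingleton ι] {lam : o → ℝ}
    (hlam : ∀ m, lam m ≠ 0) (hinj : Function.Injective fun m => lam m ^ 2)
    {G : Matrix ((Fin 2 × o) ⊕ ι) _ ℝ} (hO : G * Gᵀ = 1) (hdet : 0 < G.det)
    (h : Commute G (blockSkew lam)) : ∃ θ, G = blockRot θ := by
  obtain ⟨a, b, C, rfl⟩ := exists_eq_fromBlocks_of_commute_blockSkew hlam hinj h
  simp only [fromBlocks_transpose, blockDiagonal_transpose, fromBlocks_multiply,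
    ← blockDiagonal_mul, Matrix.mul_zero, Matrix.zero_mul, add_zero, zero_add,
    transpose_zero] at hO
  rw [← fromBlocks_one, ← blockDiagonal_one, fromBlocks_inj] at hO
  obtain ⟨hblock, -, -, hC⟩ := hO
  choose θ hθ using fun m => exists_rotBlock_eq
    (sq_add_sq_eq_one_of_mul_transpose (congrFun (blockDiagonal_injective hblock) m))
  simp only [← hθ, det_fromBlocks_zero₂₁, det_blockDiagonal, det_rotBlock,
    Finset.prod_const_one, one_mul] at hdet ⊢
  have hCC : C.det * C.det = 1 := by
    simpa [det_transpose] using congrArg det hC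
  have hC1 : C.det = 1 := (mul_self_eq_one_iff.1 hCC).resolve_right (by linarith)
  exact ⟨θ, by rw [eq_one_of_det_eq_one_of_subsingleton hC1]; rfl⟩

lemma blockRot_mul_transpose (θ : o → ℝ) :
    (blockRot θ : Matrix ((Fin 2 × o) ⊕ ι) _ ℝ) * (blockRot θ)ᵀ = 1 := by
  simp [blockRot, fromBlocks_transpose, blockDiagonal_transpose, fromBlocks_multiply,
    ← blockDiagonal_mul, rotBlock_mul_transpose, ← Pi.one_def]

lemma commute_blockRot_blockSkew (θ lam : o → ℝ) :
    Commute (blockRot θ : Matrix ((Fin 2 × o) ⊕ ι) _ ℝ) (blockSkew lam) := by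
  simp [Commute, SemiconjBy, blockRot, blockSkew, fromBlocks_multiply, ← blockDiagonal_mul,
    (commute_rotBlock_skewBlock _ _).eq]

end Blocks

section Reindex

def blockIndexEquiv (n k : ℕ) (h : 2 * k ≤ n) : (Fin 2 × Fin k) ⊕ Fin (n - 2 * k) ≃ Fin n :=
  (((Equiv.prodComm _ _).trans finProdFinEquiv).sumCongr (Equiv.refl _)).trans
    (finSumFinEquiv.trans (finCongr (by rw [mul_comm]; omega)))

variable {n k : ℕ} (h : 2 * k ≤ n)

@[simp] lemma blockIndexEquiv_inl (t : Fin 2) (m : Fin k) :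
    (blockIndexEquiv n k h (.inl (t, m)) : ℕ) = 2 * m + t := by
  simp [blockIndexEquiv, add_comm, mul_comm]

@[simp] lemma blockIndexEquiv_inr (u : Fin (n - 2 * k)) :
    (blockIndexEquiv n k h (.inr u) : ℕ) = 2 * k + u := by
  simp [blockIndexEquiv, mul_comm]

lemma Hmat_submatrix (lam : Fin k → ℝ) :
    (Hmat n k lam).submatrix (blockIndexEquiv n k h) (blockIndexEquiv n k h) = blockSkew lam := by
  ext (⟨t, m⟩ | u) (⟨t', m'⟩ | u')
  · by_cases hm : m = m'
    · subst hm
      fin_cases t <;> fin_cases t' <;> simp [Hmat, blockSkew, skewBlock]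
    · have hm' := Fin.val_ne_of_ne hm
      rw [blockSkew, submatrix_apply, fromBlocks_apply₁₁, blockDiagonal_apply_ne _ _ _ hm]
      simp only [Hmat, blockIndexEquiv_inl]
      split_ifs <;> first | rfl | omega
  all_goals
    simp only [Hmat, blockSkew, submatrix_apply, fromBlocks_apply₁₂, fromBlocks_apply₂₁,
      fromBlocks_apply₂₂, blockIndexEquiv_inl, blockIndexEquiv_inr, Matrix.zero_apply]
    split_ifs <;> first | rfl | omega

lemma RotMat_submatrix (θ : Fin k → ℝ) :
    (RotMat n k θ).submatrix (blockIndexEquiv n k h) (blockIndexEquiv n k h) = blockRot θ := by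
  ext (⟨t, m⟩ | u) (⟨t', m'⟩ | u')
  · by_cases hm : m = m'
    · subst hm
      fin_cases t <;> fin_cases t' <;> simp [RotMat, blockRot, rotBlock, Nat.mul_add_div]
    · have hm' := Fin.val_ne_of_ne hm
      rw [blockRot, submatrix_apply, fromBlocks_apply₁₁, blockDiagonal_apply_ne _ _ _ hm]
      simp only [RotMat, blockIndexEquiv_inl]
      split_ifs <;> first | rfl | omega
  all_goals
    simp only [RotMat, blockRot, submatrix_apply, fromBlocks_apply₁₂, fromBlocks_apply₂₁,
      fromBlocks_apply₂₂, blockIndexEquiv_inl, blockIndexEquiv_inr, Matrix.zero_apply,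
      one_apply, Fin.ext_iff]
    split_ifs <;> first | rfl | omega

end Reindex

lemma Hmat_transpose (n k : ℕ) (lam : Fin k → ℝ) : (Hmat n k lam)ᵀ = -Hmat n k lam := by
  ext i j
  rw [transpose_apply, Matrix.neg_apply]
  unfold Hmat
  split_ifs <;> first | simp | omega

lemma exists_eq_RotMat_of_commute_Hmat {n k : ℕ} (hn : n = 2 * k ∨ n = 2 * k + 1)
    {lam : Fin k → ℝ} (hlam : ∀ m, lam m ≠ 0) (hinj : Function.Injective fun m => lam m ^ 2)
    {g : Matrix (Fin n) (Fin n) ℝ} (hO : g * gᵀ = 1) (hdet : 0 < g.det)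
    (h : Commute g (Hmat n k lam)) : ∃ θ, g = RotMat n k θ := by
  have h2k : 2 * k ≤ n := by omega
  have : Subsingleton (Fin (n - 2 * k)) := Fin.subsingleton_iff_le_one.2 (by omega)
  set e := blockIndexEquiv n k h2k
  obtain ⟨θ, hθ⟩ := exists_eq_blockRot hlam hinj (G := g.submatrix e e)
    (by rw [transpose_submatrix, submatrix_mul_equiv, hO, submatrix_one_equiv])
    (by rwa [det_submatrix_equiv_self])
    (by rw [← Hmat_submatrix h2k]; exact h.map (reindexAlgEquiv ℝ ℝ e.symm))
  rw [← RotMat_submatrix h2k] at hθ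
  exact ⟨θ, (reindex e.symm e.symm).injective hθ⟩

lemma RotMat_mul_transpose {n k : ℕ} (h : 2 * k ≤ n) (θ : Fin k → ℝ) :
    RotMat n k θ * (RotMat n k θ)ᵀ = 1 := by
  set e := blockIndexEquiv n k h
  apply (reindex e.symm e.symm).injective
  change (RotMat n k θ * (RotMat n k θ)ᵀ).submatrix e e =
    (1 : Matrix (Fin n) (Fin n) ℝ).submatrix e e
  rw [← submatrix_mul_equiv (e₂ := e), ← transpose_submatrix, RotMat_submatrix,
    blockRot_mul_transpose, submatrix_one_equiv]

lemma commute_RotMat_Hmat {n k : ℕ} (h : 2 * k ≤ n) (θ lam : Fin k → ℝ) :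
    Commute (RotMat n k θ) (Hmat n k lam) := by
  set e := blockIndexEquiv n k h
  apply (reindex e.symm e.symm).injective
  change (RotMat n k θ * Hmat n k lam).submatrix e e =
    (Hmat n k lam * RotMat n k θ).submatrix e e
  rw [← submatrix_mul_equiv (e₂ := e), ← submatrix_mul_equiv (e₂ := e), RotMat_submatrix,
    Hmat_submatrix, (commute_blockRot_blockSkew θ lam).eq]
lemma coadjAct_one_eq_iff {n : ℕ} {x g H : Matrix (Fin n) (Fin n) ℝ} (hx : x.IsSymm)
    (hH : Hᵀ = -H) (hg : IsUnit g.det) :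
    coadjAct x g 1 H = (1, H) ↔ x = 0 ∧ g * gᵀ = 1 ∧ Commute g H := by
  simp only [coadjAct, Prod.mk.injEq, Matrix.mul_one, inv_transpose_mul_inv_eq_one_iff hg]
  refine ⟨fun ⟨hO, h⟩ => ?_, fun ⟨hx0, hO, h⟩ => ⟨hO, ?_⟩⟩
  · have hOt : gᵀ * g = 1 := mul_eq_one_comm.1 hO
    rw [inv_eq_left_inv hO, inv_eq_right_inv hO, hO, Matrix.mul_one] at h
    have hx0 : x = 0 := eq_zero_of_isSymm_of_add_eq hx
      (by simp [Matrix.mul_assoc, transpose_mul, hH]) hH h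
    rw [hx0, add_zero] at h
    refine ⟨hx0, hO, ?_⟩
    calc g * H = g * H * gᵀ * g := by rw [Matrix.mul_assoc _ gᵀ, hOt, Matrix.mul_one]
      _ = H * g := by rw [h]
  · rw [inv_eq_left_inv hO, inv_eq_right_inv hO, hO, hx0, Matrix.zero_mul, add_zero, h.eq,
      Matrix.mul_assoc, hO, Matrix.mul_one]

theorem stabilizer_of_regular_point_general (n k : ℕ)
    (hn : n = 2 * k ∨ n = 2 * k + 1) (lam : Fin k → ℝ)
    (hstrict : ∀ i j : Fin k, i < j → lam j < lam i) (hpos : ∀ i, 0 < lam i)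
    (x g : Matrix (Fin n) (Fin n) ℝ) (hx : x.IsSymm) (hg : 0 < g.det) :
    coadjAct x g 1 (Hmat n k lam) = (1, Hmat n k lam) ↔
      x = 0 ∧ ∃ θ : Fin k → ℝ, g = RotMat n k θ := by
  have hsq : Function.Injective fun m => lam m ^ 2 := fun i j hij =>
    StrictAnti.injective hstrict <| (pow_left_inj₀ (hpos i).le (hpos j).le two_ne_zero).1 hij
  have h2k : 2 * k ≤ n := by omega
  rw [coadjAct_one_eq_iff hx (Hmat_transpose n k lam) (isUnit_iff_ne_zero.2 hg.ne')]
  constructor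
  · rintro ⟨rfl, hO, hc⟩
    exact ⟨rfl, exists_eq_RotMat_of_commute_Hmat hn (fun m => (hpos m).ne') hsq hO hg hc⟩
  · rintro ⟨rfl, θ, rfl⟩
    exact ⟨rfl, RotMat_mul_transpose h2k θ, commute_RotMat_Hmat h2k θ lam⟩

theorem stabilizer_of_regular_point (n k : ℕ) (hk : 1 ≤ k)
    (hn : n = 2 * k ∨ n = 2 * k + 1) (lam : Fin k → ℝ)
    (hstrict : ∀ i j : Fin k, i < j → lam j < lam i) (hpos : ∀ i, 0 < lam i)
    (x g : Matrix (Fin n) (Fin n) ℝ) (hx : x.IsSymm) (hg : 0 < g.det) :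
    coadjAct x g 1 (Hmat n k lam) = (1, Hmat n k lam) ↔
      x = 0 ∧ ∃ θ : Fin k → ℝ, g = RotMat n k θ :=
  stabilizer_of_regular_point_general n k hn lam hstrict hpos x g hx hg
end

section
/- Let k ≥ 1. A polynomial f ∈ ℝ[λ₁,…,λ_k] is invariant under all permutations of the variables λ₁,…,λ_k and under all sign changes λᵢ ↦ −λᵢ if and only if f lies in the ℝ-subalgebra of ℝ[λ₁,…,λ_k] generated by the k polynomials f̃ᵢ = Σ_{j=1}^k λ_j^{2i}, i = 1,…,k. (This is the description of the Weyl group invariants of the Cartan subalgebra for so(2k+1).) -/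
/-!
Invariance under the sign change of `λᵢ` forces every exponent of `λᵢ` occurring in `f` to be
even, so `f = g(λ₁², …, λ_k²)`; since squaring the variables is injective and commutes with
permutations, `g` is symmetric. By the fundamental theorem of symmetric polynomials and Newton's
identities (in characteristic zero), `g` is a polynomial in the power sums `p₁, …, p_k`, and
substituting `λⱼ²` turns `pᵢ` into `f̃ᵢ`. Conversely, every polynomial in the `λⱼ²` is fixed by
sign changes, and the `f̃ᵢ` are symmetric.
-/

open MvPolynomial

namespace MvPolynomial

variable {σ R : Type*}

section CommSemiring

variable [CommSemiring R]

theorem coeff_aeval_C_mul_X (s : σ → R) (f : MvPolynomial σ R) (m : σ →₀ ℕ) :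
    coeff m (aeval (fun j => C (s j) * X j) f) = (m.prod fun j e => s j ^ e) * coeff m f := by
  classical
  induction f using MvPolynomial.induction_on' with
  | monomial u c =>
    have hmon : aeval (fun j => C (s j) * X j) (monomial u c)
        = monomial u ((u.prod fun j e => s j ^ e) * c) := by
      rw [aeval_monomial, monomial_eq, C_mul, algebraMap_eq]
      simp only [mul_pow, Finsupp.prod_mul, ← map_pow]
      rw [← map_finsuppProd]
      ring
    rw [hmon, coeff_monomial, coeff_monomial]
    split_ifs with h
    · rw [h]
    · rw [mul_zero]
  | add p q hp hq => rw [map_add, coeff_add, coeff_add, hp, hq, mul_add]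

theorem exists_expand_eq_of_forall_dvd {p : ℕ} {f : MvPolynomial σ R}
    (h : ∀ m ∈ f.support, ∀ j, p ∣ m j) : ∃ g, expand p g = f := by
  refine ⟨∑ m ∈ f.support, monomial (m.mapRange (· / p) (Nat.zero_div p)) (coeff m f), ?_⟩
  conv_rhs => rw [← f.support_sum_monomial_coeff]
  rw [map_sum]
  refine Finset.sum_congr rfl fun m hm => ?_
  rw [expand_monomial]
  congr
  ext j
  simp [Nat.mul_div_cancel' (h m hm j)]

theorem IsSymmetric.of_expand {p : ℕ} (hp : 0 < p) {g : MvPolynomial σ R}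
    (hg : (expand p g).IsSymmetric) : g.IsSymmetric := fun e =>
  expand_injective hp (by rw [← rename_expand, hg e])

theorem IsSymmetric.expand {g : MvPolynomial σ R} (hg : g.IsSymmetric) (p : ℕ) :
    (expand p g).IsSymmetric := fun e => by rw [rename_expand, hg e]

theorem expand_psum [Fintype σ] (p n : ℕ) :
    expand p (psum σ R n) = ∑ j, X j ^ (p * n) := by
  simp [psum, pow_mul]

theorem isSymmetric_of_mem_adjoin_psum [Fintype σ] {n : ℕ} {p : MvPolynomial σ R}
    (hp : p ∈ Algebra.adjoin R (Set.range fun i : Fin n => psum σ R (i + 1))) :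
    p.IsSymmetric := by
  refine Algebra.adjoin_le (S := symmetricSubalgebra σ R) ?_ hp
  rintro _ ⟨i, rfl⟩
  exact psum_isSymmetric σ R _

end CommSemiring

section CommRing

variable [CommRing R] [DecidableEq σ]

noncomputable def signFlip (i : σ) : MvPolynomial σ R →ₐ[R] MvPolynomial σ R :=
  aeval fun j => if j = i then -X j else X j

theorem coeff_signFlip (i : σ) (f : MvPolynomial σ R) (m : σ →₀ ℕ) :
    coeff m (signFlip i f) = (-1) ^ m i * coeff m f := by
  have hflip : (fun j => if j = i then -X j else X j : σ → MvPolynomial σ R)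
      = fun j => C (if j = i then -1 else 1) * X j := by
    funext j
    split_ifs <;> simp
  rw [signFlip, hflip, coeff_aeval_C_mul_X]
  simp only [ite_pow, one_pow, Finsupp.prod_ite_eq', Finsupp.mem_support_iff]
  split_ifs with h
  · rfl
  · rw [not_not.mp h, pow_zero]

theorem signFlip_expand_two (i : σ) (g : MvPolynomial σ R) :
    signFlip i (expand 2 g) = expand 2 g := by
  rw [← AlgHom.comp_apply]
  congr 1
  ext1 j
  simp only [signFlip, AlgHom.comp_apply, expand_X, map_pow, aeval_X]
  split_ifs <;> simp

theorem even_of_signFlip_eq_self [NoZeroDivisors R] [CharZero R] {i : σ}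
    {f : MvPolynomial σ R} (hf : signFlip i f = f) {m : σ →₀ ℕ} (hm : m ∈ f.support) :
    Even (m i) := by
  have hcoeff := coeff_signFlip i f m
  rw [hf] at hcoeff
  refine (Nat.even_or_odd _).resolve_right fun hodd => mem_support_iff.mp hm ?_
  rw [hodd.neg_one_pow, neg_one_mul] at hcoeff
  exact CharZero.neg_eq_self_iff.mp hcoeff.symm

end CommRing

section Field

variable [Fintype σ] [Field R] [CharZero R]

open Finset in
theorem esymm_mem_adjoin_psum {k n : ℕ} (hn : n ≤ k) :
    esymm σ R n ∈ Algebra.adjoin R (Set.range fun i : Fin k => psum σ R (i + 1)) := by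
  set S := Algebra.adjoin R (Set.range fun i : Fin k => psum σ R (i + 1))
  induction n using Nat.strong_induction_on with
  | _ n ih =>
  rcases n.eq_zero_or_pos with rfl | hn0
  · simp
  have hpsum : ∀ d, 0 < d → d ≤ k → psum σ R d ∈ S := fun d hd hdk =>
    Algebra.subset_adjoin ⟨⟨d - 1, by omega⟩, by simp only; congr; omega⟩
  have hsign : ∀ e, (-1 : MvPolynomial σ R) ^ e ∈ S := fun e =>
    S.pow_mem (S.neg_mem S.one_mem) e
  have hmul : (n : MvPolynomial σ R) * esymm σ R n ∈ S := by
    rw [mul_esymm_eq_sum]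
    refine S.mul_mem (hsign _) (S.sum_mem fun a ha => ?_)
    rw [mem_filter, HasAntidiagonal.mem_antidiagonal] at ha
    exact S.mul_mem (S.mul_mem (hsign _) (ih _ ha.2 (by omega))) (hpsum _ (by omega) (by omega))
  have hn_ne : (n : R) ≠ 0 := Nat.cast_ne_zero.mpr hn0.ne'
  convert S.smul_mem hmul (n : R)⁻¹ using 1
  rw [← nsmul_eq_mul, ← Nat.cast_smul_eq_nsmul R, smul_smul, inv_mul_cancel₀ hn_ne, one_smul]

theorem IsSymmetric.mem_adjoin_psum {p : MvPolynomial σ R} (hp : p.IsSymmetric) {n : ℕ}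
    (hn : Fintype.card σ ≤ n) :
    p ∈ Algebra.adjoin R (Set.range fun i : Fin n => psum σ R (i + 1)) := by
  obtain ⟨q, hq⟩ := esymmAlgHom_surjective R hn ⟨p, hp⟩
  have hesymm : p ∈ Algebra.adjoin R (Set.range fun i : Fin n => esymm σ R (i + 1)) := by
    rw [Algebra.adjoin_range_eq_range_aeval]
    exact ⟨q, (esymmAlgHom_apply q).symm.trans (congrArg Subtype.val hq)⟩
  refine Algebra.adjoin_le ?_ hesymm
  rintro _ ⟨i, rfl⟩
  exact esymm_mem_adjoin_psum i.isLt

end Field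

end MvPolynomial

theorem weyl_invariants_type_B_general (k : ℕ)
    (f : MvPolynomial (Fin k) ℝ) :
    ((∀ σ : Equiv.Perm (Fin k), MvPolynomial.rename σ f = f) ∧
     (∀ i : Fin k,
       MvPolynomial.aeval
         (fun j : Fin k => if j = i then -(X j : MvPolynomial (Fin k) ℝ) else X j) f = f))
    ↔ f ∈ Algebra.adjoin ℝ
        (Set.range fun i : Fin k =>
          ∑ j : Fin k, (X j : MvPolynomial (Fin k) ℝ) ^ (2 * ((i : ℕ) + 1))) := by
  have hgen : (Set.range fun i : Fin k =>
        ∑ j : Fin k, (X j : MvPolynomial (Fin k) ℝ) ^ (2 * ((i : ℕ) + 1)))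
      = expand 2 '' Set.range fun i : Fin k => psum (Fin k) ℝ (i + 1) := by
    simp only [← Set.range_comp, Function.comp_def, expand_psum]
  rw [hgen, Algebra.adjoin_image]
  constructor
  · rintro ⟨hperm, hsign⟩
    obtain ⟨g, rfl⟩ := exists_expand_eq_of_forall_dvd fun m hm j =>
      even_iff_two_dvd.mp (even_of_signFlip_eq_self (hsign j) hm)
    exact ⟨g, (IsSymmetric.of_expand two_pos hperm).mem_adjoin_psum (by simp), rfl⟩
  · rintro ⟨g, hg, rfl⟩
    exact ⟨(isSymmetric_of_mem_adjoin_psum hg).expand 2, fun i => signFlip_expand_two i g⟩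

theorem weyl_invariants_type_B (k : ℕ) (hk : 1 ≤ k)
    (f : MvPolynomial (Fin k) ℝ) :
    ((∀ σ : Equiv.Perm (Fin k), MvPolynomial.rename σ f = f) ∧
     (∀ i : Fin k,
       MvPolynomial.aeval
         (fun j : Fin k => if j = i then -(X j : MvPolynomial (Fin k) ℝ) else X j) f = f))
    ↔ f ∈ Algebra.adjoin ℝ
        (Set.range fun i : Fin k =>
          ∑ j : Fin k, (X j : MvPolynomial (Fin k) ℝ) ^ (2 * ((i : ℕ) + 1))) :=
  weyl_invariants_type_B_general k f
end

section
/- Let n ≥ 1 and i ≥ 1. Let c be an invertible symmetric n×n real matrix, a an arbitrary n×n real matrix, x a symmetric n×n real matrix, and g ∈ GL(n,ℝ) with det g > 0. Put (c', a') = Ad*(x,g)(c,a) = ((gᵀ)⁻¹ c g⁻¹, g a g⁻¹ + x (gᵀ)⁻¹ c g⁻¹). Then c' is invertible and tr( (c' a' c'⁻¹ − a'ᵀ)^{2i} ) = tr( (c a c⁻¹ − aᵀ)^{2i} ), i.e. the functions fᵢ(c,a) = (1/2^{2i}) tr((c a c⁻¹ − aᵀ)^{2i}) are invariant under the coadjoint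 action. -/
/-!
Write `D(c, a) := c a c⁻¹ - aᵀ`. The translation part of the action does not change `D`: for
symmetric `c` and `x` (and `ǧ c g⁻¹` is again symmetric), the term `x c` adds `c x c c⁻¹ = c x` to `c a c⁻¹` and `(x c)ᵀ = c x` to
`aᵀ`. The linear part conjugates it: `D(ǧ c g⁻¹, g a g⁻¹) = ǧ D(c, a) ǧ⁻¹`. Traces of powers are
conjugation invariant.
-/

open Matrix

namespace Matrix

variable {m R : Type*} [Fintype m] [DecidableEq m] [CommRing R]

theorem trace_pow_conj' {M : Matrix m m R} (h : IsUnit M) (N : Matrix m m R) (k : ℕ) :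
    trace ((M⁻¹ * N * M) ^ k) = trace (N ^ k) := by
  rw [← h.unit_spec, ← coe_units_inv, Units.conj_pow', trace_units_conj']

theorem IsSymm.transpose_inv_mul_mul_inv {c : Matrix m m R} (hc : c.IsSymm) (g : Matrix m m R) :
    ((gᵀ)⁻¹ * c * g⁻¹).IsSymm := by
  simp only [IsSymm, transpose_mul, ← transpose_nonsing_inv, transpose_transpose, hc.eq,
    Matrix.mul_assoc]

theorem isUnit_det_transpose_inv_mul_mul_inv {c g : Matrix m m R} (hc : IsUnit c.det)
    (hg : IsUnit g.det) : IsUnit ((gᵀ)⁻¹ * c * g⁻¹).det := by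
  rw [det_mul, det_mul]
  exact ((isUnit_nonsing_inv_det _ (isUnit_det_transpose _ hg)).mul hc).mul
    (isUnit_nonsing_inv_det _ hg)

theorem inv_transpose_inv_mul_mul_inv (c : Matrix m m R) {g : Matrix m m R} (hg : IsUnit g.det) :
    ((gᵀ)⁻¹ * c * g⁻¹)⁻¹ = g * c⁻¹ * gᵀ := by
  rw [mul_inv_rev, mul_inv_rev, nonsing_inv_nonsing_inv _ hg,
    nonsing_inv_nonsing_inv _ (isUnit_det_transpose _ hg), Matrix.mul_assoc]

noncomputable def conjSubTranspose (c a : Matrix m m R) : Matrix m m R :=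
  c * a * c⁻¹ - aᵀ

theorem conjSubTranspose_add_mul_self {c x : Matrix m m R} (hc : c.IsSymm) (hcu : IsUnit c.det)
    (hx : x.IsSymm) (a : Matrix m m R) :
    conjSubTranspose c (a + x * c) = conjSubTranspose c a := by
  have hcx : c * (x * c) * c⁻¹ = (x * c)ᵀ := by
    rw [transpose_mul, hc.eq, hx.eq, Matrix.mul_assoc, Matrix.mul_assoc,
      mul_nonsing_inv _ hcu, Matrix.mul_one]
  rw [conjSubTranspose, conjSubTranspose, Matrix.mul_add, Matrix.add_mul, hcx, transpose_add]
  abel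

theorem conjSubTranspose_conj (c a : Matrix m m R) {g : Matrix m m R} (hg : IsUnit g.det) :
    conjSubTranspose ((gᵀ)⁻¹ * c * g⁻¹) (g * a * g⁻¹) =
      (gᵀ)⁻¹ * conjSubTranspose c a * gᵀ := by
  rw [conjSubTranspose, conjSubTranspose, inv_transpose_inv_mul_mul_inv c hg, transpose_mul,
    transpose_mul, transpose_nonsing_inv]
  simp only [Matrix.mul_sub, Matrix.sub_mul, Matrix.mul_assoc, nonsing_inv_mul_cancel_left _ _ hg]

end Matrix

theorem trace_power_invariant_general (n i : ℕ)
    (c a x g : Matrix (Fin n) (Fin n) ℝ)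
    (hc : c.IsSymm) (hcu : IsUnit c.det) (hx : x.IsSymm) (hg : 0 < g.det) :
    IsUnit ((gᵀ)⁻¹ * c * g⁻¹).det ∧
    ((((gᵀ)⁻¹ * c * g⁻¹) * (g * a * g⁻¹ + x * ((gᵀ)⁻¹ * c * g⁻¹)) *
        ((gᵀ)⁻¹ * c * g⁻¹)⁻¹ -
        (g * a * g⁻¹ + x * ((gᵀ)⁻¹ * c * g⁻¹))ᵀ) ^ (2 * i)).trace =
      ((c * a * c⁻¹ - aᵀ) ^ (2 * i)).trace := by
  have hgu : IsUnit g.det := hg.ne'.isUnit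
  have hcu' := isUnit_det_transpose_inv_mul_mul_inv hcu hgu
  refine ⟨hcu', ?_⟩
  change trace (conjSubTranspose _ (g * a * g⁻¹ + x * _) ^ (2 * i)) =
    trace (conjSubTranspose c a ^ (2 * i))
  rw [conjSubTranspose_add_mul_self (hc.transpose_inv_mul_mul_inv g) hcu' hx,
    conjSubTranspose_conj c a hgu,
    trace_pow_conj' ((isUnit_iff_isUnit_det _).mpr (isUnit_det_transpose _ hgu))]

theorem trace_power_invariant (n i : ℕ) (hn : 1 ≤ n) (hi : 1 ≤ i)
    (c a x g : Matrix (Fin n) (Fin n) ℝ)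
    (hc : c.IsSymm) (hcu : IsUnit c.det) (hx : x.IsSymm) (hg : 0 < g.det) :
    IsUnit ((gᵀ)⁻¹ * c * g⁻¹).det ∧
    ((((gᵀ)⁻¹ * c * g⁻¹) * (g * a * g⁻¹ + x * ((gᵀ)⁻¹ * c * g⁻¹)) *
        ((gᵀ)⁻¹ * c * g⁻¹)⁻¹ -
        (g * a * g⁻¹ + x * ((gᵀ)⁻¹ * c * g⁻¹))ᵀ) ^ (2 * i)).trace =
      ((c * a * c⁻¹ - aᵀ) ^ (2 * i)).trace :=
  trace_power_invariant_general n i c a x g hc hcu hx hg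
end

section
/- Let n ≥ 1 and m ≥ 1. Let c be an invertible symmetric n×n real matrix, a an arbitrary n×n real matrix, x a symmetric n×n real matrix, and g ∈ GL(n,ℝ) with det g > 0. Put (c', a') = Ad*(x,g)(c,a) = ((gᵀ)⁻¹ c g⁻¹, g a g⁻¹ + x (gᵀ)⁻¹ c g⁻¹). Then det(c')^{2m} · tr( (c' a' c'⁻¹ − a'ᵀ)^{2m} ) = det(g)^{−4m} · det(c)^{2m} · tr( (c a c⁻¹ − aᵀ)^{2m} ), i.e. h_m(c,a) = det(c)^{2m} tr((c a c⁻¹ − aᵀ)^{2m}) is a semiinvariant of weight det(g)^{−4m} for the coadjoint action. -/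
open Matrix

private lemma conj_pow_aux {n : ℕ} (P M : Matrix (Fin n) (Fin n) ℝ)
    (hP : IsUnit P.det) (k : ℕ) : (P⁻¹ * M * P) ^ k = P⁻¹ * M ^ k * P := by
  induction k with
  | zero => simp [Matrix.nonsing_inv_mul P hP]
  | succ k ih =>
      rw [pow_succ, pow_succ, ih]
      simp only [Matrix.mul_assoc]
      rw [Matrix.mul_nonsing_inv_cancel_left P _ hP]

theorem h_m_semiinvariant (n m : ℕ) (hn : 1 ≤ n) (hm : 1 ≤ m)
    (c a x g : Matrix (Fin n) (Fin n) ℝ)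
    (hc : c.IsSymm) (hcu : IsUnit c.det) (hx : x.IsSymm) (hg : 0 < g.det) :
    ((gᵀ)⁻¹ * c * g⁻¹).det ^ (2 * m) *
      ((((gᵀ)⁻¹ * c * g⁻¹) * (g * a * g⁻¹ + x * ((gᵀ)⁻¹ * c * g⁻¹)) *
          ((gᵀ)⁻¹ * c * g⁻¹)⁻¹ -
          (g * a * g⁻¹ + x * ((gᵀ)⁻¹ * c * g⁻¹))ᵀ) ^ (2 * m)).trace =
    (g.det ^ (4 * m))⁻¹ * (c.det ^ (2 * m) *
      ((c * a * c⁻¹ - aᵀ) ^ (2 * m)).trace) := by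
  have hgu : IsUnit g.det := isUnit_iff_ne_zero.mpr hg.ne'
  have hgt : IsUnit (gᵀ).det := by simpa [Matrix.det_transpose] using hgu
  have hct : cᵀ = c := hc
  have hxt : xᵀ = x := hx
  -- the key conjugation identity
  have key : ((gᵀ)⁻¹ * c * g⁻¹) * (g * a * g⁻¹ + x * ((gᵀ)⁻¹ * c * g⁻¹)) *
      ((gᵀ)⁻¹ * c * g⁻¹)⁻¹ - (g * a * g⁻¹ + x * ((gᵀ)⁻¹ * c * g⁻¹))ᵀ
      = (gᵀ)⁻¹ * (c * a * c⁻¹ - aᵀ) * gᵀ := by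
    have hinv : ((gᵀ)⁻¹ * c * g⁻¹)⁻¹ = g * c⁻¹ * gᵀ := by
      rw [Matrix.mul_inv_rev, Matrix.mul_inv_rev,
        Matrix.nonsing_inv_nonsing_inv g hgu, Matrix.nonsing_inv_nonsing_inv gᵀ hgt]
      noncomm_ring
    rw [hinv]
    have e1 : (gᵀ)⁻¹ * c * g⁻¹ * (g * a * g⁻¹ + x * ((gᵀ)⁻¹ * c * g⁻¹)) *
        (g * c⁻¹ * gᵀ) = (gᵀ)⁻¹ * (c * a * c⁻¹) * gᵀ + (gᵀ)⁻¹ * c * g⁻¹ * x := by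
      rw [Matrix.mul_add, Matrix.add_mul]
      congr 1
      · simp only [Matrix.mul_assoc]
        rw [Matrix.nonsing_inv_mul_cancel_left g _ hgu]
        rw [Matrix.nonsing_inv_mul_cancel_left g _ hgu]
      · simp only [Matrix.mul_assoc]
        rw [Matrix.nonsing_inv_mul_cancel_left g _ hgu]
        rw [Matrix.mul_nonsing_inv_cancel_left c _ hcu]
        rw [Matrix.nonsing_inv_mul gᵀ hgt, Matrix.mul_one]
    have e2 : (g * a * g⁻¹ + x * ((gᵀ)⁻¹ * c * g⁻¹))ᵀ
        = (gᵀ)⁻¹ * aᵀ * gᵀ + (gᵀ)⁻¹ * c * g⁻¹ * x := by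
      simp only [Matrix.transpose_add, Matrix.transpose_mul,
        Matrix.transpose_nonsing_inv, Matrix.transpose_transpose, hct, hxt,
        Matrix.mul_assoc]
    rw [e1, e2]
    noncomm_ring
  rw [key, conj_pow_aux gᵀ _ hgt,
    Matrix.trace_mul_cycle, Matrix.mul_nonsing_inv gᵀ hgt, Matrix.one_mul]
  -- now the determinant part
  have hdet : ((gᵀ)⁻¹ * c * g⁻¹).det = (g.det)⁻¹ * c.det * (g.det)⁻¹ := by
    rw [Matrix.det_mul, Matrix.det_mul, Matrix.det_nonsing_inv,
      Matrix.det_nonsing_inv, Matrix.det_transpose]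
    simp [Ring.inverse_eq_inv]
  rw [hdet, ← inv_pow]
  ring
end

section
/- Let n = 2k with k ≥ 1. There exists a (necessarily unique) polynomial P in the entries c_{ij} (1 ≤ i ≤ j ≤ n) and a_{ij} (1 ≤ i, j ≤ n), with real coefficients, such that for every invertible symmetric n×n real matrix c and every n×n real matrix a, P evaluated at (c,a) equals det(c)³ · det( ½ ( a c⁻¹ − (a c⁻¹)ᵀ ) ). Equivalently, in the polynomial ring in these variables (with c regarded as a symmetric matrix of indeterminates), det(c)^{2k−3} divides det( ½ ( a · adj(c) − adj(c) · aᵀ ) ) when k ≥ 2. -/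
open Matrix

/-- Variable index type: one variable c_{ij} for each pair i ≤ j (entries of a
    symmetric matrix) and one variable a_{ij} for each pair (i,j). -/
abbrev OrbitVar (n : ℕ) := {p : Fin n × Fin n // p.1 ≤ p.2} ⊕ (Fin n × Fin n)

/-- Evaluation of the variables at a concrete pair of matrices (c, a). -/
def orbitEval {n : ℕ} (c a : Matrix (Fin n) (Fin n) ℝ) : OrbitVar n → ℝ :=
  Sum.elim (fun p => c p.1.1 p.1.2) (fun p => a p.1 p.2)

/-!
Conjugating the skew matrix `X = a c⁻¹ - (a c⁻¹)ᵀ` by the symmetric matrix `c` clears the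
inverse: `c X c = c a - aᵀ c`. Hence `det c ^ 3 * det (X / 2) = det c * det ((c a - aᵀ c) / 2)`,
and the right-hand side is a polynomial in the entries. It is unique because two polynomials
that agree wherever the nonzero polynomial `det c` does not vanish are equal: multiplied by
`det c` they agree everywhere.
-/

open MvPolynomial

theorem MvPolynomial.eq_of_eval_eq_of_eval_ne_zero {R σ : Type*} [CommRing R] [IsDomain R]
    [Infinite R] {p q d : MvPolynomial σ R} (hd : d ≠ 0)
    (h : ∀ x, eval x d ≠ 0 → eval x p = eval x q) : p = q := by
  refine mul_right_cancel₀ hd (MvPolynomial.funext fun x => ?_)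
  by_cases hx : eval x d = 0
  · simp [hx]
  · simp [h x hx]

namespace Matrix

variable {α β : Type*} {n : ℕ}

def symmOfUpper (f : {p : Fin n × Fin n // p.1 ≤ p.2} → α) : Matrix (Fin n) (Fin n) α :=
  of fun i j => if h : i ≤ j then f ⟨(i, j), h⟩ else f ⟨(j, i), (le_total i j).resolve_left h⟩

theorem symmOfUpper_apply_of_le (f : {p : Fin n × Fin n // p.1 ≤ p.2} → α) {i j : Fin n}
    (h : i ≤ j) : symmOfUpper f i j = f ⟨(i, j), h⟩ :=
  dif_pos h

theorem isSymm_symmOfUpper (f : {p : Fin n × Fin n // p.1 ≤ p.2} → α) :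
    (symmOfUpper f).IsSymm := by
  ext i j
  rcases lt_trichotomy i j with h | rfl | h
  · simp [symmOfUpper, h.le, h.not_ge]
  · rfl
  · simp [symmOfUpper, h.le, h.not_ge]

theorem symmOfUpper_map (f : {p : Fin n × Fin n // p.1 ≤ p.2} → α) (g : α → β) :
    (symmOfUpper f).map g = symmOfUpper (g ∘ f) := by
  ext i j
  simp only [symmOfUpper, map_apply, of_apply]
  split_ifs <;> rfl

theorem IsSymm.symmOfUpper_eq {c : Matrix (Fin n) (Fin n) α} (hc : c.IsSymm) :
    symmOfUpper (fun p => c p.1.1 p.1.2) = c := by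
  ext i j
  by_cases h : i ≤ j
  · exact dif_pos h
  · exact (dif_neg h).trans (hc.apply i j)

theorem mul_sub_transpose_mul_mul_eq {K : Type*} [CommRing K] {c : Matrix (Fin n) (Fin n) K}
    (a : Matrix (Fin n) (Fin n) K) (hc : c.IsSymm) (hu : IsUnit c.det) :
    c * (a * c⁻¹ - (a * c⁻¹)ᵀ) * c = c * a - aᵀ * c := by
  rw [transpose_mul, transpose_nonsing_inv, hc.eq, mul_sub, sub_mul, Matrix.mul_assoc,
    Matrix.mul_assoc, nonsing_inv_mul c hu, Matrix.mul_one, ← Matrix.mul_assoc,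
    mul_nonsing_inv c hu, Matrix.one_mul]

theorem det_pow_three_mul_det_smul_skew {K : Type*} [CommRing K] {c : Matrix (Fin n) (Fin n) K}
    (a : Matrix (Fin n) (Fin n) K) (r : K) (hc : c.IsSymm) (hu : IsUnit c.det) :
    c.det ^ 3 * (r • (a * c⁻¹ - (a * c⁻¹)ᵀ)).det = c.det * (r • (c * a - aᵀ * c)).det := by
  rw [← mul_sub_transpose_mul_mul_eq a hc hu, ← Matrix.smul_mul, ← Matrix.mul_smul, det_mul,
    det_mul]
  ring

end Matrix

variable {n : ℕ}

noncomputable def symmVarMatrix (n : ℕ) : Matrix (Fin n) (Fin n) (MvPolynomial (OrbitVar n) ℝ) :=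
  symmOfUpper (X ∘ Sum.inl)

noncomputable def varMatrix (n : ℕ) : Matrix (Fin n) (Fin n) (MvPolynomial (OrbitVar n) ℝ) :=
  of fun i j => X (Sum.inr (i, j))

theorem map_eval_symmVarMatrix {c : Matrix (Fin n) (Fin n) ℝ} (a : Matrix (Fin n) (Fin n) ℝ)
    (hc : c.IsSymm) : (symmVarMatrix n).map (eval (orbitEval c a)) = c := by
  rw [symmVarMatrix, symmOfUpper_map]
  conv_rhs => rw [← hc.symmOfUpper_eq]
  congr 1
  funext p
  simp [orbitEval]

theorem map_eval_varMatrix (c a : Matrix (Fin n) (Fin n) ℝ) :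
    (varMatrix n).map (eval (orbitEval c a)) = a := by
  ext i j
  simp [varMatrix, orbitEval]

theorem orbitEval_surjective (v : OrbitVar n → ℝ) :
    ∃ c a : Matrix (Fin n) (Fin n) ℝ, c.IsSymm ∧ orbitEval c a = v := by
  refine ⟨symmOfUpper (v ∘ Sum.inl), of fun i j => v (Sum.inr (i, j)),
    isSymm_symmOfUpper _, funext ?_⟩
  rintro (p | p)
  · exact symmOfUpper_apply_of_le _ p.2
  · rfl

theorem eval_det_symmVarMatrix {c : Matrix (Fin n) (Fin n) ℝ} (a : Matrix (Fin n) (Fin n) ℝ)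
    (hc : c.IsSymm) : eval (orbitEval c a) (symmVarMatrix n).det = c.det := by
  rw [RingHom.map_det, RingHom.mapMatrix_apply, map_eval_symmVarMatrix a hc]

theorem det_symmVarMatrix_ne_zero (n : ℕ) : (symmVarMatrix n).det ≠ 0 := fun h => by
  simpa [eval_det_symmVarMatrix 0 isSymm_one] using congrArg (eval (orbitEval 1 0)) h

noncomputable def orbitPolynomial (n : ℕ) : MvPolynomial (OrbitVar n) ℝ :=
  (symmVarMatrix n).det *
    ((1 / 2 : ℝ) • (symmVarMatrix n * varMatrix n - (varMatrix n)ᵀ * symmVarMatrix n)).det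

theorem eval_orbitPolynomial {c : Matrix (Fin n) (Fin n) ℝ} (a : Matrix (Fin n) (Fin n) ℝ)
    (hc : c.IsSymm) : eval (orbitEval c a) (orbitPolynomial n) =
      c.det * ((1 / 2 : ℝ) • (c * a - aᵀ * c)).det := by
  rw [orbitPolynomial, map_mul, eval_det_symmVarMatrix a hc, RingHom.map_det,
    RingHom.mapMatrix_apply, Matrix.map_smul _ _ fun p => smul_eval _ _ _,
    Matrix.map_sub _ (map_sub _), Matrix.map_mul, Matrix.map_mul,
    transpose_map, map_eval_symmVarMatrix a hc, map_eval_varMatrix]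

theorem h_k_is_polynomial_general (k : ℕ) :
    ∃! P : MvPolynomial (OrbitVar (2 * k)) ℝ,
      ∀ c a : Matrix (Fin (2 * k)) (Fin (2 * k)) ℝ, c.IsSymm → IsUnit c.det →
        MvPolynomial.eval (orbitEval c a) P =
          c.det ^ 3 * ((1 / 2 : ℝ) • (a * c⁻¹ - (a * c⁻¹)ᵀ)).det := by
  have hP : ∀ c a : Matrix (Fin (2 * k)) (Fin (2 * k)) ℝ, c.IsSymm → IsUnit c.det →
      eval (orbitEval c a) (orbitPolynomial (2 * k)) =
        c.det ^ 3 * ((1 / 2 : ℝ) • (a * c⁻¹ - (a * c⁻¹)ᵀ)).det := fun c a hc hu => by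
    rw [eval_orbitPolynomial a hc, det_pow_three_mul_det_smul_skew a _ hc hu]
  refine ⟨orbitPolynomial _, hP, fun Q hQ => ?_⟩
  refine eq_of_eval_eq_of_eval_ne_zero (det_symmVarMatrix_ne_zero _) fun v hv => ?_
  obtain ⟨c, a, hc, rfl⟩ := orbitEval_surjective v
  rw [eval_det_symmVarMatrix a hc] at hv
  rw [hQ c a hc (isUnit_iff_ne_zero.mpr hv), hP c a hc (isUnit_iff_ne_zero.mpr hv)]

theorem h_k_is_polynomial (k : ℕ) (hk : 1 ≤ k) :
    ∃! P : MvPolynomial (OrbitVar (2 * k)) ℝ,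
      ∀ c a : Matrix (Fin (2 * k)) (Fin (2 * k)) ℝ, c.IsSymm → IsUnit c.det →
        MvPolynomial.eval (orbitEval c a) P =
          c.det ^ 3 * ((1 / 2 : ℝ) • (a * c⁻¹ - (a * c⁻¹)ᵀ)).det :=
  h_k_is_polynomial_general k
end

section
/- Let n = 2k with k ≥ 1. Let P be a polynomial function with real coefficients in the entries c_{ij} (1 ≤ i ≤ j ≤ n) of a symmetric n×n matrix c and the entries a_{ij} (1 ≤ i,j ≤ n) of an n×n matrix a. Suppose that P is invariant under the coadjoint action on the positive definite locus, i.e. P(Ad*(x,g)(c,a)) = P(c,a) for every symmetric n×n real matrix x, every g ∈ GL(n,ℝ) with det g > 0, every positive definite symmetric n×n real matrix c and every n×n real matrix a. Then P is constant. -/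
open Matrix

/-! Taking `g` scalar gives `P(t c, a) = P(c, a)` for `t > 0` and positive definite `c`; since
this is a polynomial in `t`, it is constant, and `t = 0` shows that on the positive definite locus
`P(c, a) = P(0, a)`. Taking `g = 1` then gives `P(0, a + x c) = P(0, a)` for symmetric `x` and
positive definite `c`. Every matrix `m` is `z + x D` with `z`, `x` symmetric and
`D = diag(1, …, n)` (solve `x i j * (d j - d i) = m i j - m j i` off the diagonal), so `P(0, ·)`
is translation invariant, hence constant. Finally `c + t (c² + 1)` is positive definite for every
symmetric `c` and `t > 1/2`, and the same polynomial-in-`t` argument reaches all symmetric `c`. -/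

open Polynomial in
theorem MvPolynomial.exists_polynomial_eval_add_smul {σ R : Type*} [CommRing R]
    (P : MvPolynomial σ R) (u w : σ → R) :
    ∃ q : R[X], ∀ t, q.eval t = MvPolynomial.eval (u + t • w) P := by
  refine ⟨aeval (fun i => Polynomial.C (u i) + Polynomial.C (w i) * Polynomial.X) P,
    fun t => ?_⟩
  rw [← Polynomial.coe_aeval_eq_eval, comp_aeval_apply, aeval_eq_eval]
  congr 2
  funext i
  simp only [map_add, map_mul, Polynomial.aeval_C, Polynomial.aeval_X, Pi.add_apply, Pi.smul_apply,
    smul_eq_mul, Algebra.algebraMap_self, RingHom.id_apply]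
  ring

theorem MvPolynomial.eval_eq_of_forall_gt {σ : Type*} {P : MvPolynomial σ ℝ} {u w : σ → ℝ}
    {r M : ℝ} (h : ∀ t, M < t → MvPolynomial.eval (u + t • w) P = r) :
    MvPolynomial.eval u P = r := by
  obtain ⟨q, hq⟩ := P.exists_polynomial_eval_add_smul u w
  have hqr : q = Polynomial.C r :=
    Polynomial.eq_of_infinite_eval_eq _ _ <| (Set.Ioi_infinite M).mono fun t ht => by
      simp [hq, h t ht]
  simpa [hqr] using (hq 0).symm

theorem Matrix.IsSymm.posDef_add_smul_mul_self_add_one {n : Type*} [Fintype n] [DecidableEq n]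
    {c : Matrix n n ℝ} (hc : c.IsSymm) {t : ℝ} (ht : 1 / 2 < t) :
    (c + t • (c * c + 1)).PosDef := by
  have hcH : cᴴ = c := by rw [conjTranspose_eq_transpose_of_trivial, hc.eq]
  have hsplit : c + t • (c * c + 1) =
      (t - 1 / 2) • (cᴴ * c + 1) + (1 / 2 : ℝ) • ((c + 1)ᴴ * (c + 1)) := by
    simp only [conjTranspose_add, conjTranspose_one, hcH, add_mul, mul_add, mul_one, one_mul]
    module
  rw [hsplit]
  have hsq : (cᴴ * c + 1).PosDef :=
    PosDef.posSemidef_add (posSemidef_conjTranspose_mul_self c) PosDef.one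
  exact (hsq.smul (by linarith)).add_posSemidef
    ((posSemidef_conjTranspose_mul_self _).smul (by norm_num))

theorem Matrix.exists_isSymm_sub_mul_diagonal_isSymm {ι K : Type*} [Fintype ι] [DecidableEq ι]
    [Field K] {d : ι → K} (hd : Function.Injective d) (m : Matrix ι ι K) :
    ∃ x : Matrix ι ι K, x.IsSymm ∧ (m - x * diagonal d).IsSymm := by
  refine ⟨of fun i j => (m i j - m j i) / (d j - d i), ?_, ?_⟩
  · ext i j
    simp only [transpose_apply, of_apply]
    rw [← neg_sub (m i j), ← neg_sub (d j), neg_div_neg_eq]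
  · ext i j
    simp only [transpose_apply, sub_apply, mul_diagonal, of_apply]
    rcases eq_or_ne i j with rfl | hij
    · rfl
    · have hdij : d j - d i ≠ 0 := sub_ne_zero.2 (hd.ne hij.symm)
      have hdji : d i - d j ≠ 0 := sub_ne_zero.2 (hd.ne hij)
      field_simp
      ring

open MvPolynomial

theorem orbitEval_add_smul {n : ℕ} (c d a : Matrix (Fin n) (Fin n) ℝ) (t : ℝ) :
    orbitEval (c + t • d) a = orbitEval c a + t • orbitEval d 0 := by
  ext (p | p) <;> simp [orbitEval]

theorem exists_isSymm_orbitEval_eq {n : ℕ} (v : OrbitVar n → ℝ) :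
    ∃ c a : Matrix (Fin n) (Fin n) ℝ, c.IsSymm ∧ orbitEval c a = v := by
  refine ⟨of fun i j => v (.inl ⟨(min i j, max i j), min_le_max⟩),
    of fun i j => v (.inr (i, j)), ?_, ?_⟩
  · ext i j
    simp only [transpose_apply, of_apply, min_comm, max_comm]
  · ext (⟨⟨i, j⟩, hij⟩ | p)
    · simp [orbitEval, min_eq_left hij, max_eq_right hij]
    · rfl

theorem eq_C_of_forall_isSymm_eval_orbitEval {n : ℕ} {P : MvPolynomial (OrbitVar n) ℝ} {r : ℝ}
    (h : ∀ c a : Matrix (Fin n) (Fin n) ℝ, c.IsSymm → eval (orbitEval c a) P = r) :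
    P = C r := by
  refine MvPolynomial.funext fun v => ?_
  obtain ⟨c, a, hc, rfl⟩ := exists_isSymm_orbitEval_eq v
  simpa using h c a hc

def IsCoadjointInvariant {n : ℕ} (P : MvPolynomial (OrbitVar n) ℝ) : Prop :=
  ∀ x g c a : Matrix (Fin n) (Fin n) ℝ, x.IsSymm → 0 < g.det → c.PosDef →
    eval
      (orbitEval ((gᵀ)⁻¹ * c * g⁻¹) (g * a * g⁻¹ + x * ((gᵀ)⁻¹ * c * g⁻¹))) P =
      eval (orbitEval c a) P

namespace IsCoadjointInvariant

variable {n : ℕ} {P : MvPolynomial (OrbitVar n) ℝ}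

theorem eval_smul_left (hP : IsCoadjointInvariant P) {c : Matrix (Fin n) (Fin n) ℝ}
    (hc : c.PosDef) (a : Matrix (Fin n) (Fin n) ℝ) {t : ℝ} (ht : 0 < t) :
    eval (orbitEval (t • c) a) P = eval (orbitEval c a) P := by
  obtain ⟨s, hs, rfl⟩ : ∃ s, 0 < s ∧ s * s = t :=
    ⟨√t, Real.sqrt_pos.2 ht, Real.mul_self_sqrt ht.le⟩
  have hginv : (s⁻¹ • 1 : Matrix (Fin n) (Fin n) ℝ)⁻¹ = s • 1 :=
    inv_eq_left_inv (by simp [smul_smul, hs.ne'])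
  have h := hP 0 (s⁻¹ • 1) c a isSymm_zero (by simp [hs]) hc
  simpa [hginv, smul_smul, hs.ne'] using h

theorem eval_eq_eval_zero_left (hP : IsCoadjointInvariant P) {c : Matrix (Fin n) (Fin n) ℝ}
    (hc : c.PosDef) (a : Matrix (Fin n) (Fin n) ℝ) :
    eval (orbitEval c a) P = eval (orbitEval 0 a) P := by
  refine (eval_eq_of_forall_gt (M := 0) (w := orbitEval c 0) fun t ht => ?_).symm
  rw [← orbitEval_add_smul, zero_add, hP.eval_smul_left hc a ht]

theorem eval_zero_left_add_mul (hP : IsCoadjointInvariant P) (a : Matrix (Fin n) (Fin n) ℝ)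
    {x c : Matrix (Fin n) (Fin n) ℝ} (hx : x.IsSymm) (hc : c.PosDef) :
    eval (orbitEval 0 (a + x * c)) P = eval (orbitEval 0 a) P := by
  have h := hP x 1 c a hx (by simp) hc
  simp only [transpose_one, inv_one, Matrix.one_mul, Matrix.mul_one] at h
  rwa [hP.eval_eq_eval_zero_left hc, hP.eval_eq_eval_zero_left hc] at h

theorem eval_zero_left_add (hP : IsCoadjointInvariant P) (a m : Matrix (Fin n) (Fin n) ℝ) :
    eval (orbitEval 0 (a + m)) P = eval (orbitEval 0 a) P := by
  set D : Matrix (Fin n) (Fin n) ℝ := diagonal fun i => (i : ℝ) + 1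
  have hD : D.PosDef := PosDef.diagonal fun i => by positivity
  obtain ⟨x, hx, hz⟩ := exists_isSymm_sub_mul_diagonal_isSymm
    (d := fun i : Fin n => (i : ℝ) + 1) (fun i j h => by simpa [Fin.val_inj] using h) m
  calc eval (orbitEval 0 (a + m)) P
      = eval (orbitEval 0 (a + (m - x * D) * 1 + x * D)) P := by
        rw [Matrix.mul_one, add_assoc, sub_add_cancel]
    _ = eval (orbitEval 0 a) P := by
        rw [hP.eval_zero_left_add_mul _ hx hD, hP.eval_zero_left_add_mul _ hz PosDef.one]

theorem eval_eq_of_posDef (hP : IsCoadjointInvariant P) {c : Matrix (Fin n) (Fin n) ℝ}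
    (hc : c.PosDef) (a : Matrix (Fin n) (Fin n) ℝ) :
    eval (orbitEval c a) P = eval (orbitEval 0 0) P := by
  rw [hP.eval_eq_eval_zero_left hc, ← hP.eval_zero_left_add 0 a, zero_add]

end IsCoadjointInvariant

theorem invariant_polynomials_are_constant_general (k : ℕ)
    (P : MvPolynomial (OrbitVar (2 * k)) ℝ)
    (hP : ∀ x g c a : Matrix (Fin (2 * k)) (Fin (2 * k)) ℝ,
      x.IsSymm → 0 < g.det → c.PosDef →
      MvPolynomial.eval
        (orbitEval ((gᵀ)⁻¹ * c * g⁻¹) (g * a * g⁻¹ + x * ((gᵀ)⁻¹ * c * g⁻¹))) P =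
        MvPolynomial.eval (orbitEval c a) P) :
    ∃ r : ℝ, P = MvPolynomial.C r := by
  have hinv : IsCoadjointInvariant P := hP
  refine ⟨eval (orbitEval 0 0) P, eq_C_of_forall_isSymm_eval_orbitEval fun c a hc => ?_⟩
  refine eval_eq_of_forall_gt (M := 1 / 2) (w := orbitEval (c * c + 1) 0) fun t ht => ?_
  rw [← orbitEval_add_smul]
  exact hinv.eval_eq_of_posDef (hc.posDef_add_smul_mul_self_add_one ht) a

theorem invariant_polynomials_are_constant (k : ℕ) (hk : 1 ≤ k)
    (P : MvPolynomial (OrbitVar (2 * k)) ℝ)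
    (hP : ∀ x g c a : Matrix (Fin (2 * k)) (Fin (2 * k)) ℝ,
      x.IsSymm → 0 < g.det → c.PosDef →
      MvPolynomial.eval
        (orbitEval ((gᵀ)⁻¹ * c * g⁻¹) (g * a * g⁻¹ + x * ((gᵀ)⁻¹ * c * g⁻¹))) P =
        MvPolynomial.eval (orbitEval c a) P) :
    ∃ r : ℝ, P = MvPolynomial.C r :=
  invariant_polynomials_are_constant_general k P hP
end
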